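/- For every integer k ≥ 3 and all positive integers n, N with n ≥ N^{1/2}, one has r_k(N)/N ≥ (1/8)·(r_k(n)/n)². -/
import Mathlib


open Finset Pointwise

/-- The `k`-term arithmetic progression `{x, x+d, …, x+(k-1)d}` as a finite set. -/
def AP (k : ℕ) (x d : ℤ) : Finset ℤ := (Finset.range k).image (fun i : ℕ => x + (i : ℤ) * d)

/-- A set of integers is `k`-AP free if it contains no nontrivial `k`-term
arithmetic progression. -/
def APFree (k : ℕ) (A : Set ℤ) : Prop :=
  ∀ x d : ℤ, d ≠ 0 → ¬ (↑(AP k x d) : Set ℤ) ⊆ A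

/-- `fAP s A` is the number of nontrivial `s`-term arithmetic progressions contained
in the finite set `A`. -/
noncomputable def fAP (s : ℕ) (A : Finset ℤ) : ℕ :=
  Nat.card {P : Finset ℤ // P ⊆ A ∧ ∃ x d : ℤ, d ≠ 0 ∧ P = AP s x d}

/-- `fsk s k n` is the maximum number of nontrivial `s`-term arithmetic progressions
in a `k`-AP free set of `n` integers. -/
noncomputable def fsk (s k n : ℕ) : ℕ :=
  sSup {m | ∃ A : Finset ℤ, A.card = n ∧ APFree k ↑A ∧ fAP s A = m}

/-- `rk k n` is the size of the largest `k`-AP free subset of `{1, …, n}`. -/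
noncomputable def rk (k n : ℕ) : ℕ :=
  sSup {m | ∃ A : Finset ℤ, A ⊆ Finset.Icc 1 (n : ℤ) ∧ APFree k ↑A ∧ A.card = m}

/-- The partial sumset `A +_G B` along the edge set `E` of a bipartite graph. -/
def partialSumset (E : Finset (ℤ × ℤ)) : Finset ℤ := E.image (fun e => e.1 + e.2)

/-- `pathCount A B E a a'` is the number of (ordered) paths `(a, b, a'', b', a')` of
length four between `a` and `a'` in the bipartite graph with parts `A`, `B` and
edge set `E`. -/
def pathCount (A B : Finset ℤ) (E : Finset (ℤ × ℤ)) (a a' : ℤ) : ℕ :=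
  ((B ×ˢ A ×ˢ B).filter (fun t =>
    (a, t.1) ∈ E ∧ (t.2.1, t.1) ∈ E ∧ (t.2.1, t.2.2) ∈ E ∧ (a', t.2.2) ∈ E)).card

lemma mem_AP {k : ℕ} {x d y : ℤ} : y ∈ AP k x d ↔ ∃ i, i < k ∧ y = x + (i : ℤ) * d := by
  simp [AP, Finset.mem_image, Finset.mem_range, eq_comm]

lemma apfree_mono {k : ℕ} {A B : Set ℤ} (h : A ⊆ B) (hB : APFree k B) : APFree k A :=
  fun x d hd hsub => hB x d hd (hsub.trans h)

lemma apfree_translate {k : ℕ} (c : ℤ) {A : Finset ℤ} (h : APFree k (↑A : Set ℤ)) :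
    APFree k (↑(A.image (fun z => z + c)) : Set ℤ) := by
  intro x d hd hsub
  apply h (x - c) d hd
  intro y hy
  have hy' : y ∈ AP k (x - c) d := hy
  obtain ⟨i, hi, rfl⟩ := mem_AP.mp hy'
  have : (x - c + i * d) + c ∈ AP k x d := mem_AP.mpr ⟨i, hi, by ring⟩
  have := hsub this
  simp only [Finset.coe_image, Set.mem_image, Finset.mem_coe] at this
  obtain ⟨z, hz, hzc⟩ := this
  have : z = x - c + i * d := by omega
  simpa [← this] using hz

lemma apfree_empty {k : ℕ} (hk : 0 < k) : APFree k (↑(∅ : Finset ℤ) : Set ℤ) := by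
  intro x d hd hsub
  have : x ∈ AP k x d := mem_AP.mpr ⟨0, hk, by ring⟩
  exact absurd (hsub this) (by simp)

lemma rk_bddAbove (k n : ℕ) :
    BddAbove {m | ∃ A : Finset ℤ, A ⊆ Finset.Icc 1 (n : ℤ) ∧ APFree k ↑A ∧ A.card = m} := by
  refine ⟨n, fun m hm => ?_⟩
  obtain ⟨A, hA, _, rfl⟩ := hm
  calc A.card ≤ (Finset.Icc (1:ℤ) n).card := Finset.card_le_card hA
    _ = n := by simp

lemma le_rk {k N : ℕ} {A : Finset ℤ} (hA : A ⊆ Finset.Icc 1 (N : ℤ))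
    (hf : APFree k (↑A : Set ℤ)) : A.card ≤ rk k N :=
  le_csSup (rk_bddAbove k N) ⟨A, hA, hf, rfl⟩

lemma exists_rk (k n : ℕ) (hk : 0 < k) :
    ∃ A : Finset ℤ, A ⊆ Finset.Icc 1 (n : ℤ) ∧ APFree k ↑A ∧ A.card = rk k n := by
  have hne : ({m | ∃ A : Finset ℤ, A ⊆ Finset.Icc 1 (n : ℤ) ∧ APFree k ↑A ∧ A.card = m} :
      Set ℕ).Nonempty := ⟨0, ∅, by simp, apfree_empty hk, rfl⟩
  have := Nat.sSup_mem hne (rk_bddAbove k n)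
  obtain ⟨A, h1, h2, h3⟩ := this
  exact ⟨A, h1, h2, h3⟩

lemma eq_zero_of_mul_bounds {n u v : ℤ} (hn : 1 ≤ n) (h : u = 2*n*v)
    (h1 : -(2*n) < u) (h2 : u < 2*n) : v = 0 := by
  by_contra hv
  have habs : |u| < 2*n := abs_lt.mpr ⟨h1, h2⟩
  have h1v : 1 ≤ |v| := Int.one_le_abs hv
  have : 2*n ≤ |u| := by
    rw [h, abs_mul, abs_of_nonneg (by linarith : (0:ℤ) ≤ 2*n)]
    nlinarith
  linarith

section Main

variable {k n : ℕ} {A : Finset ℤ}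

lemma sumset_injOn (hA : A ⊆ Finset.Icc 1 (n : ℤ)) :
    Set.InjOn (fun p : ℤ × ℤ => p.1 + 2*(n:ℤ)*p.2) ↑(A ×ˢ A) := by
  intro p hp q hq hpq
  simp only [Finset.coe_product, Set.mem_prod, Finset.mem_coe] at hp hq
  obtain ⟨hp1, hp2⟩ := hp; obtain ⟨hq1, hq2⟩ := hq
  have b1 := Finset.mem_Icc.mp (hA hp1)
  have b2 := Finset.mem_Icc.mp (hA hp2)
  have b3 := Finset.mem_Icc.mp (hA hq1)
  have b4 := Finset.mem_Icc.mp (hA hq2)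
  have hn : (1:ℤ) ≤ n := by linarith [b1.1, b1.2]
  have hv : q.2 - p.2 = 0 := by
    refine eq_zero_of_mul_bounds hn (u := p.1 - q.1) ?_ ?_ ?_
    · have : p.1 + 2*(n:ℤ)*p.2 = q.1 + 2*n*q.2 := hpq
      ring_nf; ring_nf at this; linarith
    · linarith
    · linarith
  have : p.1 + 2*(n:ℤ)*p.2 = q.1 + 2*n*q.2 := hpq
  have h1 : p.2 = q.2 := by linarith
  have h2 : p.1 = q.1 := by rw [h1] at this; linarith
  exact Prod.ext h2 h1

lemma card_sumset (hA : A ⊆ Finset.Icc 1 (n : ℤ)) :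
    ((A ×ˢ A).image (fun p : ℤ × ℤ => p.1 + 2*(n:ℤ)*p.2)).card = A.card ^ 2 := by
  rw [Finset.card_image_of_injOn (sumset_injOn hA), Finset.card_product, sq]

lemma apfree_sumset (hk : 3 ≤ k) (hA : A ⊆ Finset.Icc 1 (n : ℤ))
    (hAf : APFree k (↑A : Set ℤ)) :
    APFree k (↑((A ×ˢ A).image (fun p : ℤ × ℤ => p.1 + 2*(n:ℤ)*p.2)) : Set ℤ) := by
  intro x d hd hsub
  have h0 : 0 < k := by omega
  have h1 : 1 < k := by omega
  have hmem : ∀ i, i < k → ∃ a b : ℤ, a ∈ A ∧ b ∈ A ∧ x + (i:ℤ) * d = a + 2*n*b := by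
    intro i hi
    have hx : x + (i:ℤ)*d ∈ AP k x d := mem_AP.mpr ⟨i, hi, rfl⟩
    have := hsub hx
    simp only [Finset.coe_image, Set.mem_image, Finset.mem_coe, Finset.mem_product] at this
    obtain ⟨⟨a, b⟩, ⟨ha, hb⟩, heq⟩ := this
    exact ⟨a, b, ha, hb, heq.symm⟩
  choose a b ha hb heq using hmem
  have bnd : ∀ i (hi : i < k), (1:ℤ) ≤ a i hi ∧ a i hi ≤ n :=
    fun i hi => Finset.mem_Icc.mp (hA (ha i hi))
  have hn : (1:ℤ) ≤ n := by linarith [(bnd 0 h0).1, (bnd 0 h0).2]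
  set e : ℤ := a 1 h1 - a 0 h0 with he_def
  set e2 : ℤ := b 1 h1 - b 0 h0 with he2_def
  have hde : d = e + 2*n*e2 := by
    have q0 := heq 0 h0
    have q1 := heq 1 h1
    push_cast at q0 q1
    rw [he_def, he2_def]; ring_nf; ring_nf at q0 q1; linarith
  have step : ∀ i (hi1 : i + 1 < k) (hi : i < k),
      a (i+1) hi1 - a i hi = e ∧ b (i+1) hi1 - b i hi = e2 := by
    intro i hi1 hi
    have q1 := heq i hi
    have q2 := heq (i+1) hi1
    push_cast at q1 q2
    have hdd : d = (a (i+1) hi1 - a i hi) + 2*n*(b (i+1) hi1 - b i hi) := by linarith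
    have hv : e2 - (b (i+1) hi1 - b i hi) = 0 := by
      refine eq_zero_of_mul_bounds hn (u := a (i+1) hi1 - a i hi - e) (by linarith [hde]) ?_ ?_
      · have c1 := bnd (i+1) hi1; have c2 := bnd i hi
        have c3 := bnd 1 h1; have c4 := bnd 0 h0
        rw [he_def]; omega
      · have c1 := bnd (i+1) hi1; have c2 := bnd i hi
        have c3 := bnd 1 h1; have c4 := bnd 0 h0
        rw [he_def]; omega
    constructor
    · have := hde; nlinarith [hv]
    · omega
  have formula : ∀ i (hi : i < k),
      a i hi = a 0 h0 + (i:ℤ) * e ∧ b i hi = b 0 h0 + (i:ℤ) * e2 := by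
    intro i
    induction i with
    | zero => intro hi; simp
    | succ i ih =>
      intro hi1
      have hi : i < k := by omega
      obtain ⟨s1, s2⟩ := step i hi1 hi
      obtain ⟨f1, f2⟩ := ih hi
      constructor <;> push_cast <;> [linarith; linarith]
  by_cases he : e = 0
  · -- then e2 ≠ 0, b's form an AP
    have he2 : e2 ≠ 0 := by
      intro h0'; apply hd; rw [hde, he, h0']; ring
    apply hAf (b 0 h0) e2 he2
    intro y hy
    obtain ⟨i, hi, rfl⟩ := mem_AP.mp hy
    have := (formula i hi).2
    rw [← this]
    exact hb i hi
  · apply hAf (a 0 h0) e he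
    intro y hy
    obtain ⟨i, hi, rfl⟩ := mem_AP.mp hy
    have := (formula i hi).1
    rw [← this]
    exact ha i hi

end Main

set_option maxHeartbeats 1600000 in
theorem rk_density_sqrt (k : ℕ) (hk : 3 ≤ k) (n N : ℕ) (hn : 0 < n) (hN : 0 < N)
    (h : Real.sqrt N ≤ (n : ℝ)) :
    (1 / 8 : ℝ) * ((rk k n : ℝ) / n) ^ 2 ≤ (rk k N : ℝ) / N := by
  have hk0 : 0 < k := by omega
  -- N ≤ n^2
  have hNn : N ≤ n ^ 2 := by
    have h1 : (N : ℝ) ≤ ((n ^ 2 : ℕ) : ℝ) := by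
      have h2 := Real.sq_sqrt (by positivity : (0:ℝ) ≤ (N:ℝ))
      push_cast
      nlinarith [Real.sqrt_nonneg (N:ℝ)]
    exact_mod_cast h1
  obtain ⟨A, hAsub, hAf, hAcard⟩ := exists_rk k n hk0
  set r : ℕ := rk k n with hr
  set C : Finset ℤ := (A ×ˢ A).image (fun p : ℤ × ℤ => p.1 + 2*(n:ℤ)*p.2) with hC
  have hCcard : C.card = r ^ 2 := by rw [hC, card_sumset hAsub, hAcard]
  have hCf : APFree k (↑C : Set ℤ) := apfree_sumset hk hAsub hAf
  have hCsub : ∀ c ∈ C, (1:ℤ) ≤ c ∧ c ≤ ((2*n^2 + n : ℕ) : ℤ) := by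
    intro c hc
    simp only [hC, Finset.mem_image, Finset.mem_product] at hc
    obtain ⟨⟨p1, p2⟩, ⟨hp1, hp2⟩, rfl⟩ := hc
    have b1 := Finset.mem_Icc.mp (hAsub hp1)
    have b2 := Finset.mem_Icc.mp (hAsub hp2)
    push_cast
    constructor <;> nlinarith [b1.1, b1.2, b2.1, b2.2]
  -- pigeonhole over t intervals of length N
  set t : ℕ := (2*n^2 + n) / N + 1 with ht
  have ht0 : 0 < t := Nat.succ_pos _
  set g : ℤ → ℕ := fun c => (c - 1).toNat / N with hg
  have hgmem : ∀ c ∈ C, g c ∈ Finset.range t := by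
    intro c hc
    obtain ⟨hc1, hc2⟩ := hCsub c hc
    have hm : (c - 1).toNat ≤ 2*n^2 + n := Int.toNat_le.mpr (by linarith)
    have hdle : (c-1).toNat / N ≤ (2*n^2 + n) / N := Nat.div_le_div_right hm
    simp only [Finset.mem_range, hg, ht]
    exact Nat.lt_succ_of_le hdle
  have hsum : C.card = ∑ j ∈ Finset.range t, (C.filter (fun c => g c = j)).card :=
    Finset.card_eq_sum_card_fiberwise hgmem
  obtain ⟨j, hjmem, hjmax⟩ := Finset.exists_max_image (Finset.range t)
    (fun j => (C.filter (fun c => g c = j)).card) ⟨0, Finset.mem_range.mpr ht0⟩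
  set F : Finset ℤ := C.filter (fun c => g c = j) with hF
  have hpigeon : r ^ 2 ≤ t * F.card := by
    calc r ^ 2 = C.card := hCcard.symm
      _ = ∑ j' ∈ Finset.range t, (C.filter (fun c => g c = j')).card := hsum
      _ ≤ ∑ _j' ∈ Finset.range t, F.card := Finset.sum_le_sum (fun i hi => hjmax i hi)
      _ = t * F.card := by simp [Finset.sum_const, Finset.card_range, mul_comm]
  -- translate F into [1, N]
  have hFf : APFree k (↑F : Set ℤ) :=
    apfree_mono (Finset.coe_subset.mpr (Finset.filter_subset _ _)) hCf
  set D : Finset ℤ := F.image (fun z => z + (-(j : ℤ) * N)) with hD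
  have hDf : APFree k (↑D : Set ℤ) := apfree_translate _ hFf
  have hDcard : D.card = F.card :=
    Finset.card_image_of_injective _ (add_left_injective _)
  have hDsub : D ⊆ Finset.Icc 1 (N : ℤ) := by
    intro z hz
    simp only [hD, Finset.mem_image] at hz
    obtain ⟨c, hc, rfl⟩ := hz
    simp only [hF, Finset.mem_filter] at hc
    obtain ⟨hcC, hcg⟩ := hc
    obtain ⟨hc1, _⟩ := hCsub c hcC
    have hlow : j * N ≤ (c-1).toNat := by
      rw [← hcg]; simp only [hg]; exact Nat.div_mul_le_self _ _
    have hhigh : (c-1).toNat < (j+1) * N := by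
      rw [← hcg]; simp only [hg, Nat.add_mul, Nat.one_mul]
      exact Nat.lt_div_mul_add hN
    have hcast : ((c-1).toNat : ℤ) = c - 1 := Int.toNat_of_nonneg (by linarith)
    simp only [Finset.mem_Icc]
    constructor
    · have h1 : ((j * N : ℕ) : ℤ) ≤ c - 1 := by rw [← hcast]; exact_mod_cast hlow
      push_cast at h1; linarith
    · have h2 : c - 1 < (((j+1) * N : ℕ) : ℤ) := by rw [← hcast]; exact_mod_cast hhigh
      push_cast at h2; linarith
  have hrkN : F.card ≤ rk k N := hDcard ▸ le_rk hDsub hDf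
  have hkey : r ^ 2 ≤ t * rk k N := hpigeon.trans (Nat.mul_le_mul_left t hrkN)
  have htN : t * N ≤ 4 * n ^ 2 := by
    have h1 : (2*n^2 + n) / N * N ≤ 2*n^2 + n := Nat.div_mul_le_self _ _
    have h2 : n ≤ n ^ 2 := by nlinarith
    calc t * N = (2*n^2 + n) / N * N + N := by rw [ht, Nat.add_mul, Nat.one_mul]
      _ ≤ 2*n^2 + n + n^2 := by omega
      _ ≤ 4 * n^2 := by omega
  -- finish over ℝ
  have hkey' : (r : ℝ) ^ 2 * N ≤ 4 * (n:ℝ)^2 * (rk k N : ℝ) := by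
    have c1 : ((r ^ 2 * N : ℕ) : ℝ) ≤ ((t * rk k N * N : ℕ) : ℝ) := by
      exact_mod_cast Nat.mul_le_mul_right N hkey
    have c2 : ((t * N : ℕ) : ℝ) ≤ ((4 * n^2 : ℕ) : ℝ) := by exact_mod_cast htN
    push_cast at c1 c2
    nlinarith [Nat.cast_nonneg (α := ℝ) (rk k N), c1, c2]
  have hn' : (0:ℝ) < n := by exact_mod_cast hn
  have hN' : (0:ℝ) < N := by exact_mod_cast hN
  have hrw : (1/8:ℝ) * ((r:ℝ)/n)^2 = (r:ℝ)^2 / (8*(n:ℝ)^2) := by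
    rw [div_pow]; ring
  rw [hrw, div_le_div_iff₀ (by positivity) hN']
  nlinarith [Nat.cast_nonneg (α := ℝ) (rk k N)]
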